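/- Let T = (c₁,c₂,0,c₄,c₅,0,f₁,f₂,f₃,f₄,t₁,t₂) and T′ = (c₁,c₂,0,c₄,c₅,0,f₁′,f₂′,f₃′,f₄′,t₁′,t₂′) be tuples in ℤ¹² with the same values c₁, c₂, c₄, c₅, all nonzero, and with gcd(c₁,c₄) = 1 and gcd(c₂,c₅) = 1. Then T and T′ are ψ-equivalent if and only if: f₁ ≡ f₁′ (mod gcd(c₁,c₅)); f₂ ≡ f₂′ (mod gcd(c₂,c₄)); f₃ ≡ f₃′ (mod gcd(c₄,c₅)); and f₄ ≡ f₄′ (mod gcd(c₁,c₂)). -/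

import Mathlib

/-- A 12-tuple of integers, with coordinates written `(c₁,…,c₆,f₁,…,f₄,t₁,t₂)`. -/
structure Tuple : Type where
  c1 : ℤ
  c2 : ℤ
  c3 : ℤ
  c4 : ℤ
  c5 : ℤ
  c6 : ℤ
  f1 : ℤ
  f2 : ℤ
  f3 : ℤ
  f4 : ℤ
  t1 : ℤ
  t2 : ℤ

/-- The move ψ₂₁ : f₃↦f₃+c₅, f₄↦f₄−c₁, t₁↦t₁+f₁. -/
def psi21 : Equiv.Perm Tuple where
  toFun x := { x with f3 := x.f3 + x.c5, f4 := x.f4 - x.c1, t1 := x.t1 + x.f1 }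
  invFun x := { x with f3 := x.f3 - x.c5, f4 := x.f4 + x.c1, t1 := x.t1 - x.f1 }
  left_inv x := by cases x; simp
  right_inv x := by cases x; simp

/-- The move ψ₄₁ : f₂↦f₂+c₆, f₃↦f₃−c₅, t₂↦t₂−f₁. -/
def psi41 : Equiv.Perm Tuple where
  toFun x := { x with f2 := x.f2 + x.c6, f3 := x.f3 - x.c5, t2 := x.t2 - x.f1 }
  invFun x := { x with f2 := x.f2 - x.c6, f3 := x.f3 + x.c5, t2 := x.t2 + x.f1 }
  left_inv x := by cases x; simp
  right_inv x := by cases x; simp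

/-- The move ψ₁₂ : f₃↦f₃−c₄, f₄↦f₄+c₂, t₁↦t₁+f₂. -/
def psi12 : Equiv.Perm Tuple where
  toFun x := { x with f3 := x.f3 - x.c4, f4 := x.f4 + x.c2, t1 := x.t1 + x.f2 }
  invFun x := { x with f3 := x.f3 + x.c4, f4 := x.f4 - x.c2, t1 := x.t1 - x.f2 }
  left_inv x := by cases x; simp
  right_inv x := by cases x; simp

/-- The move ψ₃₂ : f₁↦f₁+c₆, f₄↦f₄−c₂, t₂↦t₂−f₂. -/
def psi32 : Equiv.Perm Tuple where
  toFun x := { x with f1 := x.f1 + x.c6, f4 := x.f4 - x.c2, t2 := x.t2 - x.f2 }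
  invFun x := { x with f1 := x.f1 - x.c6, f4 := x.f4 + x.c2, t2 := x.t2 + x.f2 }
  left_inv x := by cases x; simp
  right_inv x := by cases x; simp

/-- The move ψ₄₃ : f₁↦f₁+c₅, f₂↦f₂−c₄, t₁↦t₁+f₃. -/
def psi43 : Equiv.Perm Tuple where
  toFun x := { x with f1 := x.f1 + x.c5, f2 := x.f2 - x.c4, t1 := x.t1 + x.f3 }
  invFun x := { x with f1 := x.f1 - x.c5, f2 := x.f2 + x.c4, t1 := x.t1 - x.f3 }
  left_inv x := by cases x; simp
  right_inv x := by cases x; simp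

/-- The move ψ₂₃ : f₁↦f₁−c₅, f₄↦f₄+c₃, t₂↦t₂−f₃. -/
def psi23 : Equiv.Perm Tuple where
  toFun x := { x with f1 := x.f1 - x.c5, f4 := x.f4 + x.c3, t2 := x.t2 - x.f3 }
  invFun x := { x with f1 := x.f1 + x.c5, f4 := x.f4 - x.c3, t2 := x.t2 + x.f3 }
  left_inv x := by cases x; simp
  right_inv x := by cases x; simp

/-- The move ψ₃₄ : f₁↦f₁−c₁, f₂↦f₂+c₂, t₁↦t₁+f₄. -/
def psi34 : Equiv.Perm Tuple where
  toFun x := { x with f1 := x.f1 - x.c1, f2 := x.f2 + x.c2, t1 := x.t1 + x.f4 }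
  invFun x := { x with f1 := x.f1 + x.c1, f2 := x.f2 - x.c2, t1 := x.t1 - x.f4 }
  left_inv x := by cases x; simp
  right_inv x := by cases x; simp

/-- The move ψ₁₄ : f₂↦f₂−c₂, f₃↦f₃+c₃, t₂↦t₂−f₄. -/
def psi14 : Equiv.Perm Tuple where
  toFun x := { x with f2 := x.f2 - x.c2, f3 := x.f3 + x.c3, t2 := x.t2 - x.f4 }
  invFun x := { x with f2 := x.f2 + x.c2, f3 := x.f3 - x.c3, t2 := x.t2 + x.f4 }
  left_inv x := by cases x; simp
  right_inv x := by cases x; simp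

/-- The list of the eight ψ-moves. -/
def psiMoves : List (Equiv.Perm Tuple) :=
  [psi21, psi41, psi12, psi32, psi43, psi23, psi34, psi14]

/-- Two tuples are ψ-equivalent if one is obtained from the other by a finite
composition of the eight ψ-moves and their inverses, i.e. they are related by the
equivalence relation generated by single applications of the moves. -/
def PsiEquiv : Tuple → Tuple → Prop :=
  Relation.EqvGen (fun x y => ∃ g ∈ psiMoves, g x = y)

/-!
Every move fixes the `cᵢ` and changes `f₁, f₂, f₃, f₄` by elements of the ideals
`(c₁, c₅, c₆)`, `(c₂, c₄, c₆)`, `(c₃, c₄, c₅)`, `(c₁, c₂, c₃)` respectively, so the classes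
of the `fᵢ` modulo these ideals are invariants; with `c₃ = c₆ = 0` these are the four gcd
conditions.

Conversely, when `c₃ = c₆ = 0`, integer powers of three moves shift a single `fᵢ` by any
element of its ideal, at the cost of changing `t₁, t₂`. Commutators of a power of one move
with another move change only the `t`'s: by `-k c₁` or `-k c₄` in `t₂`, and by
`(k c₂, -k c₂)` or `(k c₅, -k c₅)` in `(t₁, t₂)`. Since `c₂, c₅` and `c₁, c₄` are coprime,
this makes the `t`'s arbitrary.
-/

open Relation

theorem Relation.EqvGen.of_rel_succ {α : Type*} {r : α → α → Prop} (F : ℤ → α)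
    (hF : ∀ k, r (F k) (F (k + 1))) (k : ℤ) : EqvGen r (F 0) (F k) := by
  induction k using Int.induction_on with
  | zero => exact .refl _
  | succ n ih => exact ih.trans _ _ _ (.rel _ _ (hF n))
  | pred n ih => exact ih.trans _ _ _ (.symm _ _ (.rel _ _ (by simpa using hF (-n - 1))))

theorem Relation.EqvGen.eq_and_sub_mem {α R : Type*} [Ring R] {r : α → α → Prop}
    (I : α → Ideal R) (φ : α → R) (hr : ∀ x y, r x y → I y = I x ∧ φ x - φ y ∈ I x)
    {x y : α} (h : EqvGen r x y) : I y = I x ∧ φ x - φ y ∈ I x := by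
  induction h with
  | rel x y hxy => exact hr x y hxy
  | refl x => simp
  | symm x y _ ih => exact ⟨ih.1.symm, ih.1 ▸ by simpa using neg_mem ih.2⟩
  | trans x y z _ _ ihxy ihyz =>
    refine ⟨ihyz.1.trans ihxy.1, ?_⟩
    rw [← sub_add_sub_cancel (φ x) (φ y) (φ z)]
    exact add_mem ihxy.2 (ihxy.1 ▸ ihyz.2)

theorem PsiEquiv.trans {x y z : Tuple} : PsiEquiv x y → PsiEquiv y z → PsiEquiv x z :=
  EqvGen.trans x y z

theorem PsiEquiv.of_eq {x y : Tuple} (h : x = y) : PsiEquiv x y :=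
  h ▸ EqvGen.refl x

section Invariants

theorem PsiEquiv.sub_mem (I : Tuple → Ideal ℤ) (φ : Tuple → ℤ)
    (hI : ∀ g ∈ psiMoves, ∀ x, I (g x) = I x)
    (hφ : ∀ g ∈ psiMoves, ∀ x, φ x - φ (g x) ∈ I x) {x y : Tuple} (h : PsiEquiv x y) :
    φ x - φ y ∈ I x := by
  refine (EqvGen.eq_and_sub_mem I φ ?_ h).2
  rintro x _ ⟨g, hg, rfl⟩
  exact ⟨hI g hg x, hφ g hg x⟩

attribute [local simp] psi21 psi41 psi12 psi32 psi43 psi23 psi34 psi14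

variable {x y : Tuple} (h : PsiEquiv x y)
include h

theorem PsiEquiv.f1_sub_mem : x.f1 - y.f1 ∈ Ideal.span {x.c1, x.c5, x.c6} := by
  refine h.sub_mem (fun x ↦ Ideal.span {x.c1, x.c5, x.c6}) Tuple.f1 (by simp [psiMoves]) ?_
  simp [psiMoves]
  and_intros <;> exact fun x ↦ Ideal.subset_span (by simp)

theorem PsiEquiv.f2_sub_mem : x.f2 - y.f2 ∈ Ideal.span {x.c2, x.c4, x.c6} := by
  refine h.sub_mem (fun x ↦ Ideal.span {x.c2, x.c4, x.c6}) Tuple.f2 (by simp [psiMoves]) ?_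
  simp [psiMoves]
  and_intros <;> exact fun x ↦ Ideal.subset_span (by simp)

theorem PsiEquiv.f3_sub_mem : x.f3 - y.f3 ∈ Ideal.span {x.c3, x.c4, x.c5} := by
  refine h.sub_mem (fun x ↦ Ideal.span {x.c3, x.c4, x.c5}) Tuple.f3 (by simp [psiMoves]) ?_
  simp [psiMoves]
  and_intros <;> exact fun x ↦ Ideal.subset_span (by simp)

theorem PsiEquiv.f4_sub_mem : x.f4 - y.f4 ∈ Ideal.span {x.c1, x.c2, x.c3} := by
  refine h.sub_mem (fun x ↦ Ideal.span {x.c1, x.c2, x.c3}) Tuple.f4 (by simp [psiMoves]) ?_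
  simp [psiMoves]
  and_intros <;> exact fun x ↦ Ideal.subset_span (by simp)

end Invariants

theorem PsiEquiv.of_succ (g : Equiv.Perm Tuple) (hg : g ∈ psiMoves) (F : ℤ → Tuple)
    (hF : ∀ k, g (F k) = F (k + 1)) (k : ℤ) : PsiEquiv (F 0) (F k) :=
  EqvGen.of_rel_succ F (fun k ↦ ⟨g, hg, hF k⟩) k

section Reachability

variable {c1 c2 c3 c4 c5 c6 f1 f2 f3 f4 t1 t2 : ℤ} (k : ℤ)

theorem psiEquiv_psi21_zpow :
    PsiEquiv ⟨c1, c2, c3, c4, c5, c6, f1, f2, f3, f4, t1, t2⟩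
      ⟨c1, c2, c3, c4, c5, c6, f1, f2, f3 + k * c5, f4 - k * c1, t1 + k * f1, t2⟩ := by
  simpa using PsiEquiv.of_succ psi21 (by simp [psiMoves])
    (fun k ↦ ⟨c1, c2, c3, c4, c5, c6, f1, f2, f3 + k * c5, f4 - k * c1, t1 + k * f1, t2⟩)
    (fun k ↦ by simp [psi21]; grind) k

theorem psiEquiv_psi41_zpow :
    PsiEquiv ⟨c1, c2, c3, c4, c5, c6, f1, f2, f3, f4, t1, t2⟩
      ⟨c1, c2, c3, c4, c5, c6, f1, f2 + k * c6, f3 - k * c5, f4, t1, t2 - k * f1⟩ := by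
  simpa using PsiEquiv.of_succ psi41 (by simp [psiMoves])
    (fun k ↦ ⟨c1, c2, c3, c4, c5, c6, f1, f2 + k * c6, f3 - k * c5, f4, t1, t2 - k * f1⟩)
    (fun k ↦ by simp [psi41]; grind) k

theorem psiEquiv_psi12_zpow :
    PsiEquiv ⟨c1, c2, c3, c4, c5, c6, f1, f2, f3, f4, t1, t2⟩
      ⟨c1, c2, c3, c4, c5, c6, f1, f2, f3 - k * c4, f4 + k * c2, t1 + k * f2, t2⟩ := by
  simpa using PsiEquiv.of_succ psi12 (by simp [psiMoves])
    (fun k ↦ ⟨c1, c2, c3, c4, c5, c6, f1, f2, f3 - k * c4, f4 + k * c2, t1 + k * f2, t2⟩)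
    (fun k ↦ by simp [psi12]; grind) k

theorem psiEquiv_psi32_zpow :
    PsiEquiv ⟨c1, c2, c3, c4, c5, c6, f1, f2, f3, f4, t1, t2⟩
      ⟨c1, c2, c3, c4, c5, c6, f1 + k * c6, f2, f3, f4 - k * c2, t1, t2 - k * f2⟩ := by
  simpa using PsiEquiv.of_succ psi32 (by simp [psiMoves])
    (fun k ↦ ⟨c1, c2, c3, c4, c5, c6, f1 + k * c6, f2, f3, f4 - k * c2, t1, t2 - k * f2⟩)
    (fun k ↦ by simp [psi32]; grind) k

theorem psiEquiv_psi43_zpow :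
    PsiEquiv ⟨c1, c2, c3, c4, c5, c6, f1, f2, f3, f4, t1, t2⟩
      ⟨c1, c2, c3, c4, c5, c6, f1 + k * c5, f2 - k * c4, f3, f4, t1 + k * f3, t2⟩ := by
  simpa using PsiEquiv.of_succ psi43 (by simp [psiMoves])
    (fun k ↦ ⟨c1, c2, c3, c4, c5, c6, f1 + k * c5, f2 - k * c4, f3, f4, t1 + k * f3, t2⟩)
    (fun k ↦ by simp [psi43]; grind) k

theorem psiEquiv_psi23_zpow :
    PsiEquiv ⟨c1, c2, c3, c4, c5, c6, f1, f2, f3, f4, t1, t2⟩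
      ⟨c1, c2, c3, c4, c5, c6, f1 - k * c5, f2, f3, f4 + k * c3, t1, t2 - k * f3⟩ := by
  simpa using PsiEquiv.of_succ psi23 (by simp [psiMoves])
    (fun k ↦ ⟨c1, c2, c3, c4, c5, c6, f1 - k * c5, f2, f3, f4 + k * c3, t1, t2 - k * f3⟩)
    (fun k ↦ by simp [psi23]; grind) k

theorem psiEquiv_psi34_zpow :
    PsiEquiv ⟨c1, c2, c3, c4, c5, c6, f1, f2, f3, f4, t1, t2⟩
      ⟨c1, c2, c3, c4, c5, c6, f1 - k * c1, f2 + k * c2, f3, f4, t1 + k * f4, t2⟩ := by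
  simpa using PsiEquiv.of_succ psi34 (by simp [psiMoves])
    (fun k ↦ ⟨c1, c2, c3, c4, c5, c6, f1 - k * c1, f2 + k * c2, f3, f4, t1 + k * f4, t2⟩)
    (fun k ↦ by simp [psi34]; grind) k

theorem psiEquiv_psi14_zpow :
    PsiEquiv ⟨c1, c2, c3, c4, c5, c6, f1, f2, f3, f4, t1, t2⟩
      ⟨c1, c2, c3, c4, c5, c6, f1, f2 - k * c2, f3 + k * c3, f4, t1, t2 - k * f4⟩ := by
  simpa using PsiEquiv.of_succ psi14 (by simp [psiMoves])
    (fun k ↦ ⟨c1, c2, c3, c4, c5, c6, f1, f2 - k * c2, f3 + k * c3, f4, t1, t2 - k * f4⟩)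
    (fun k ↦ by simp [psi14]; grind) k

theorem psiEquiv_t2_sub_mul_c1 :
    PsiEquiv ⟨c1, c2, c3, c4, c5, c6, f1, f2, f3, f4, t1, t2⟩
      ⟨c1, c2, c3, c4, c5, c6, f1, f2, f3, f4, t1, t2 - k * c1⟩ := by
  refine (psiEquiv_psi41_zpow k).trans <| (psiEquiv_psi34_zpow 1).trans <|
    (psiEquiv_psi41_zpow (-k)).trans <| (psiEquiv_psi34_zpow (-1)).trans <| .of_eq ?_
  congr 1 <;> ring

theorem psiEquiv_t2_sub_mul_c4 :
    PsiEquiv ⟨c1, c2, c3, c4, c5, c6, f1, f2, f3, f4, t1, t2⟩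
      ⟨c1, c2, c3, c4, c5, c6, f1, f2, f3, f4, t1, t2 - k * c4⟩ := by
  refine (psiEquiv_psi23_zpow k).trans <| (psiEquiv_psi12_zpow 1).trans <|
    (psiEquiv_psi23_zpow (-k)).trans <| (psiEquiv_psi12_zpow (-1)).trans <| .of_eq ?_
  congr 1 <;> ring

theorem psiEquiv_t_add_mul_c5 :
    PsiEquiv ⟨c1, c2, c3, c4, c5, c6, f1, f2, f3, f4, t1, t2⟩
      ⟨c1, c2, c3, c4, c5, c6, f1, f2, f3, f4, t1 + k * c5, t2 - k * c5⟩ := by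
  refine (psiEquiv_psi21_zpow k).trans <| (psiEquiv_psi23_zpow 1).trans <|
    (psiEquiv_psi21_zpow (-k)).trans <| (psiEquiv_psi23_zpow (-1)).trans <| .of_eq ?_
  congr 1 <;> ring

theorem psiEquiv_t_add_mul_c2 :
    PsiEquiv ⟨c1, c2, c3, c4, c5, c6, f1, f2, f3, f4, t1, t2⟩
      ⟨c1, c2, c3, c4, c5, c6, f1, f2, f3, f4, t1 + k * c2, t2 - k * c2⟩ := by
  refine (psiEquiv_psi12_zpow k).trans <| (psiEquiv_psi14_zpow 1).trans <|
    (psiEquiv_psi12_zpow (-k)).trans <| (psiEquiv_psi14_zpow (-1)).trans <| .of_eq ?_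
  congr 1 <;> ring

theorem psiEquiv_t_of_isCoprime {t1' t2' : ℤ} (h14 : IsCoprime c1 c4) (h25 : IsCoprime c2 c5) :
    PsiEquiv ⟨c1, c2, c3, c4, c5, c6, f1, f2, f3, f4, t1, t2⟩
      ⟨c1, c2, c3, c4, c5, c6, f1, f2, f3, f4, t1', t2'⟩ := by
  obtain ⟨u, v, huv⟩ := h25
  obtain ⟨p, q, hpq⟩ := h14
  set m := t1' - t1
  set n := t2' - t2 + m
  refine (psiEquiv_t_add_mul_c2 (m * u)).trans <| (psiEquiv_t_add_mul_c5 (m * v)).trans <|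
    (psiEquiv_t2_sub_mul_c1 (-(n * p))).trans <| (psiEquiv_t2_sub_mul_c4 (-(n * q))).trans <|
    .of_eq ?_
  congr 1
  · linear_combination m * huv
  · linear_combination n * hpq - m * huv

theorem exists_psiEquiv_of_f1_sub_mem {f1' : ℤ} (hf : f1 - f1' ∈ Ideal.span {c1, c5}) :
    ∃ t1' t2', PsiEquiv ⟨c1, c2, 0, c4, c5, 0, f1, f2, f3, f4, t1, t2⟩
      ⟨c1, c2, 0, c4, c5, 0, f1', f2, f3, f4, t1', t2'⟩ := by
  obtain ⟨a, b, hab⟩ := Ideal.mem_span_pair.1 hf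
  obtain rfl := (sub_eq_iff_comm.1 hab.symm).symm
  exact ⟨_, _, (psiEquiv_psi34_zpow a).trans <| (psiEquiv_psi14_zpow a).trans <|
    (psiEquiv_psi23_zpow b).trans <| .of_eq (by congr 1 <;> ring)⟩

theorem exists_psiEquiv_of_f2_sub_mem {f2' : ℤ} (hf : f2 - f2' ∈ Ideal.span {c2, c4}) :
    ∃ t1' t2', PsiEquiv ⟨c1, c2, 0, c4, c5, 0, f1, f2, f3, f4, t1, t2⟩
      ⟨c1, c2, 0, c4, c5, 0, f1, f2', f3, f4, t1', t2'⟩ := by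
  obtain ⟨a, b, hab⟩ := Ideal.mem_span_pair.1 hf
  obtain rfl := (sub_eq_iff_comm.1 hab.symm).symm
  exact ⟨_, _, (psiEquiv_psi14_zpow a).trans <| (psiEquiv_psi43_zpow b).trans <|
    (psiEquiv_psi23_zpow b).trans <| .of_eq (by congr 1 <;> ring)⟩

theorem exists_psiEquiv_of_f3_sub_mem {f3' : ℤ} (hf : f3 - f3' ∈ Ideal.span {c4, c5}) :
    ∃ t1' t2', PsiEquiv ⟨c1, c2, 0, c4, c5, 0, f1, f2, f3, f4, t1, t2⟩
      ⟨c1, c2, 0, c4, c5, 0, f1, f2, f3', f4, t1', t2'⟩ := by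
  obtain ⟨a, b, hab⟩ := Ideal.mem_span_pair.1 hf
  obtain rfl := (sub_eq_iff_comm.1 hab.symm).symm
  exact ⟨_, _, (psiEquiv_psi12_zpow a).trans <| (psiEquiv_psi32_zpow a).trans <|
    (psiEquiv_psi41_zpow b).trans <| .of_eq (by congr 1 <;> ring)⟩

theorem exists_psiEquiv_of_f4_sub_mem {f4' : ℤ} (hf : f4 - f4' ∈ Ideal.span {c1, c2}) :
    ∃ t1' t2', PsiEquiv ⟨c1, c2, 0, c4, c5, 0, f1, f2, f3, f4, t1, t2⟩
      ⟨c1, c2, 0, c4, c5, 0, f1, f2, f3, f4', t1', t2'⟩ := by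
  obtain ⟨a, b, hab⟩ := Ideal.mem_span_pair.1 hf
  obtain rfl := (sub_eq_iff_comm.1 hab.symm).symm
  exact ⟨_, _, (psiEquiv_psi21_zpow a).trans <| (psiEquiv_psi41_zpow a).trans <|
    (psiEquiv_psi32_zpow b).trans <| .of_eq (by congr 1 <;> ring)⟩

end Reachability

theorem Int.gcd_dvd_iff_mem_span_pair {a b n : ℤ} :
    (Int.gcd a b : ℤ) ∣ n ↔ n ∈ Ideal.span {a, b} := by
  rw [Int.coe_gcd, ← Ideal.mem_span_singleton, span_gcd]

theorem classification_case4_general (c1 c2 c4 c5 f1 f2 f3 f4 t1 t2 f1' f2' f3' f4' t1' t2' : ℤ)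
    (h14 : Int.gcd c1 c4 = 1) (h25 : Int.gcd c2 c5 = 1) :
    PsiEquiv ⟨c1, c2, 0, c4, c5, 0, f1, f2, f3, f4, t1, t2⟩
        ⟨c1, c2, 0, c4, c5, 0, f1', f2', f3', f4', t1', t2'⟩ ↔
      ((Int.gcd c1 c5 : ℤ) ∣ f1 - f1' ∧
        (Int.gcd c2 c4 : ℤ) ∣ f2 - f2' ∧
        (Int.gcd c4 c5 : ℤ) ∣ f3 - f3' ∧
        (Int.gcd c1 c2 : ℤ) ∣ f4 - f4') := by
  simp only [Int.gcd_dvd_iff_mem_span_pair]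
  constructor
  · intro h
    refine ⟨?_, ?_, ?_, ?_⟩
    · simpa [Ideal.span_insert] using h.f1_sub_mem
    · simpa [Ideal.span_insert] using h.f2_sub_mem
    · simpa [Ideal.span_insert] using h.f3_sub_mem
    · simpa [Ideal.span_insert] using h.f4_sub_mem
  · rintro ⟨h1, h2, h3, h4⟩
    refine (exists_psiEquiv_of_f1_sub_mem h1).elim fun _ ⟨_, H1⟩ ↦ H1.trans ?_
    refine (exists_psiEquiv_of_f2_sub_mem h2).elim fun _ ⟨_, H2⟩ ↦ H2.trans ?_
    refine (exists_psiEquiv_of_f3_sub_mem h3).elim fun _ ⟨_, H3⟩ ↦ H3.trans ?_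
    refine (exists_psiEquiv_of_f4_sub_mem h4).elim fun _ ⟨_, H4⟩ ↦ H4.trans ?_
    exact psiEquiv_t_of_isCoprime (Int.isCoprime_iff_gcd_eq_one.2 h14)
      (Int.isCoprime_iff_gcd_eq_one.2 h25)

/-- Classification when c₃ = c₆ = 0, c₁, c₂, c₄, c₅ ≠ 0, gcd(c₁,c₄) = gcd(c₂,c₅) = 1:
two such tuples are ψ-equivalent iff f₁ ≡ f₁′ (mod gcd(c₁,c₅)),
f₂ ≡ f₂′ (mod gcd(c₂,c₄)), f₃ ≡ f₃′ (mod gcd(c₄,c₅)) and f₄ ≡ f₄′ (mod gcd(c₁,c₂)). -/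
theorem classification_case4 (c1 c2 c4 c5 f1 f2 f3 f4 t1 t2 f1' f2' f3' f4' t1' t2' : ℤ)
    (hc1 : c1 ≠ 0) (hc2 : c2 ≠ 0) (hc4 : c4 ≠ 0) (hc5 : c5 ≠ 0)
    (h14 : Int.gcd c1 c4 = 1) (h25 : Int.gcd c2 c5 = 1) :
    PsiEquiv ⟨c1, c2, 0, c4, c5, 0, f1, f2, f3, f4, t1, t2⟩
        ⟨c1, c2, 0, c4, c5, 0, f1', f2', f3', f4', t1', t2'⟩ ↔
      ((Int.gcd c1 c5 : ℤ) ∣ f1 - f1' ∧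
        (Int.gcd c2 c4 : ℤ) ∣ f2 - f2' ∧
        (Int.gcd c4 c5 : ℤ) ∣ f3 - f3' ∧
        (Int.gcd c1 c2 : ℤ) ∣ f4 - f4') :=
  classification_case4_general c1 c2 c4 c5 f1 f2 f3 f4 t1 t2 f1' f2' f3' f4' t1' t2' h14 h25
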